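/- arXiv:1609.05976 — 11 statements merged into one kernel-verified Lean document; each statement's English description precedes it below -/
import Mathlib

section
/- In a tangled closure algebra, for every finite nonempty set Γ, the element Cᵗ Γ equals the join of the set of all post-fixed points of f_Γ, i.e. Cᵗ Γ = ⋁{a ∈ A : a ≤ ⋀_{γ∈Γ} C(γ ∧ a)} (and in particular this join exists). -/
theorem stmt_3 {A : Type*} [BooleanAlgebra A]
    (Ct : Finset A → A) (C : A → A)
    (hC : ∀ a, C a = Ct {a})
    (hadd : ∀ a b, C (a ⊔ b) = C a ⊔ C b)
    (hbot : C ⊥ = ⊥)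
    (hinfl : ∀ a, a ≤ C a)
    (hidem : ∀ a, C (C a) = C a)
    (hFix : ∀ Γ : Finset A, Γ.Nonempty → Ct Γ ≤ Γ.inf (fun γ => C (γ ⊓ Ct Γ)))
    (hInd : ∀ (Γ : Finset A) (a : A), Γ.Nonempty →
      (C ((aᶜ ⊔ Γ.inf (fun γ => C (γ ⊓ a)))ᶜ))ᶜ ⊓ a ≤ Ct Γ)
    (Γ : Finset A) (hne : Γ.Nonempty) :
    IsLUB {a : A | a ≤ Γ.inf (fun γ => C (γ ⊓ a))} (Ct Γ) := by
  constructor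
  · intro a ha
    have htop : aᶜ ⊔ Γ.inf (fun γ => C (γ ⊓ a)) = ⊤ := by
      refine top_unique ?_
      calc (⊤ : A) = aᶜ ⊔ a := compl_sup_eq_top.symm
        _ ≤ aᶜ ⊔ Γ.inf (fun γ => C (γ ⊓ a)) := sup_le_sup_left ha _
    have := hInd Γ a hne
    rw [htop] at this
    simpa [hbot] using this
  · intro b hb
    exact hb (hFix Γ hne)
end

section
/- In a tangled closure algebra, for every finite nonempty Γ, Cᵗ Γ is the greatest fixed point of the monotone map f_Γ(a) = ⋀_{γ∈Γ} C(γ ∧ a); that is, Cᵗ Γ = f_Γ(Cᵗ Γ), and any a with a = f_Γ(a) satisfies a ≤ Cᵗ Γ. -/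
theorem stmt_4 {A : Type*} [BooleanAlgebra A]
    (Ct : Finset A → A) (C : A → A)
    (hC : ∀ a, C a = Ct {a})
    (hadd : ∀ a b, C (a ⊔ b) = C a ⊔ C b)
    (hbot : C ⊥ = ⊥)
    (hinfl : ∀ a, a ≤ C a)
    (hidem : ∀ a, C (C a) = C a)
    (hFix : ∀ Γ : Finset A, Γ.Nonempty → Ct Γ ≤ Γ.inf (fun γ => C (γ ⊓ Ct Γ)))
    (hInd : ∀ (Γ : Finset A) (a : A), Γ.Nonempty →
      (C ((aᶜ ⊔ Γ.inf (fun γ => C (γ ⊓ a)))ᶜ))ᶜ ⊓ a ≤ Ct Γ)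
    (Γ : Finset A) (hne : Γ.Nonempty) :
    Ct Γ = Γ.inf (fun γ => C (γ ⊓ Ct Γ)) ∧
      ∀ a : A, a = Γ.inf (fun γ => C (γ ⊓ a)) → a ≤ Ct Γ := by
  have hmono : ∀ a b : A, a ≤ b → C a ≤ C b := by
    intro a b hab
    have : C b = C a ⊔ C b := by rw [← hadd, sup_eq_right.mpr hab]
    rw [this]; exact le_sup_left
  -- key: any post-fixpoint is below Ct Γ
  have key : ∀ a : A, a ≤ Γ.inf (fun γ => C (γ ⊓ a)) → a ≤ Ct Γ := by
    intro a ha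
    have htop : aᶜ ⊔ Γ.inf (fun γ => C (γ ⊓ a)) = ⊤ := by
      rw [eq_top_iff]
      calc (⊤ : A) = aᶜ ⊔ a := (compl_sup_eq_top).symm
        _ ≤ aᶜ ⊔ Γ.inf (fun γ => C (γ ⊓ a)) := sup_le_sup_left ha _
    have := hInd Γ a hne
    rwa [htop, compl_top, hbot, compl_bot, top_inf_eq] at this
  have hpost := hFix Γ hne
  have hge : Γ.inf (fun γ => C (γ ⊓ Ct Γ)) ≤ Ct Γ := by
    apply key
    apply Finset.le_inf
    intro γ hγ
    calc Γ.inf (fun γ => C (γ ⊓ Ct Γ)) ≤ C (γ ⊓ Ct Γ) := Finset.inf_le hγ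
      _ ≤ C (γ ⊓ Γ.inf (fun γ => C (γ ⊓ Ct Γ))) :=
        hmono _ _ (inf_le_inf_left _ hpost)
  exact ⟨le_antisymm hpost hge, fun a ha => key a ha.le⟩
end

section
/- Every complete closure algebra (A, C) expands uniquely to a tangled closure algebra by defining Cᵗ Γ = ⋁{a ∈ A : a ≤ ⋀_{γ∈Γ} C(γ ∧ a)}; i.e., this Cᵗ satisfies Fix and Ind and its induced unary operation is C. -/
theorem stmt_5 {A : Type*} [CompleteBooleanAlgebra A] (C : A → A)
    (hadd : ∀ a b, C (a ⊔ b) = C a ⊔ C b)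
    (hbot : C ⊥ = ⊥)
    (hinfl : ∀ a, a ≤ C a)
    (hidem : ∀ a, C (C a) = C a)
    (Ct : Finset A → A)
    (hCt : ∀ Γ : Finset A, Ct Γ = sSup {a : A | a ≤ Γ.inf (fun γ => C (γ ⊓ a))}) :
    (∀ a : A, Ct {a} = C a) ∧
    (∀ Γ : Finset A, Γ.Nonempty → Ct Γ ≤ Γ.inf (fun γ => C (γ ⊓ Ct Γ))) ∧
    (∀ (Γ : Finset A) (a : A), Γ.Nonempty →
      (C ((aᶜ ⊔ Γ.inf (fun γ => C (γ ⊓ a)))ᶜ))ᶜ ⊓ a ≤ Ct Γ) ∧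
    (∀ Ct' : Finset A → A,
      (∀ a : A, Ct' {a} = C a) →
      (∀ Γ : Finset A, Γ.Nonempty → Ct' Γ ≤ Γ.inf (fun γ => C (γ ⊓ Ct' Γ))) →
      (∀ (Γ : Finset A) (a : A), Γ.Nonempty →
        (C ((aᶜ ⊔ Γ.inf (fun γ => C (γ ⊓ a)))ᶜ))ᶜ ⊓ a ≤ Ct' Γ) →
      ∀ Γ : Finset A, Γ.Nonempty → Ct' Γ = Ct Γ) := by
  have hmono : ∀ {a b : A}, a ≤ b → C a ≤ C b := by
    intro a b h
    have h2 : a ⊔ b = b := sup_eq_right.mpr h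
    calc C a ≤ C a ⊔ C b := le_sup_left
      _ = C (a ⊔ b) := (hadd a b).symm
      _ = C b := by rw [h2]
  -- Fix: Ct Γ is itself a member of the defining set
  have hfix : ∀ Γ : Finset A, Ct Γ ≤ Γ.inf (fun γ => C (γ ⊓ Ct Γ)) := by
    intro Γ
    conv_lhs => rw [hCt]
    apply sSup_le
    intro b hb
    apply Finset.le_inf
    intro γ hγ
    have h1 : b ≤ C (γ ⊓ b) := hb.trans (Finset.inf_le hγ)
    refine h1.trans (hmono (inf_le_inf_left γ ?_))
    rw [hCt]
    exact le_sSup hb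
  -- Ind
  have hind : ∀ (Γ : Finset A) (a : A),
      (C ((aᶜ ⊔ Γ.inf (fun γ => C (γ ⊓ a)))ᶜ))ᶜ ⊓ a ≤ Ct Γ := by
    intro Γ a
    set m := Γ.inf (fun γ => C (γ ⊓ a)) with hm
    set i := (C ((aᶜ ⊔ m)ᶜ))ᶜ with hi
    have hiopen : C iᶜ = iᶜ := by
      rw [hi, compl_compl]; exact hidem _
    have hile : i ≤ aᶜ ⊔ m := by
      have h := compl_le_compl (hinfl ((aᶜ ⊔ m)ᶜ))
      rwa [compl_compl] at h
    -- open sets distribute over closure: i ⊓ C y ≤ C (i ⊓ y)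
    have hdist : ∀ y : A, i ⊓ C y ≤ C (i ⊓ y) := by
      intro y
      have hy : y ≤ (i ⊓ y) ⊔ iᶜ := by
        have : y = (i ⊓ y) ⊔ (iᶜ ⊓ y) := by
          rw [← inf_sup_right, sup_compl_eq_top, top_inf_eq]
        conv_lhs => rw [this]
        exact sup_le_sup le_rfl inf_le_left
      have : C y ≤ C (i ⊓ y) ⊔ iᶜ := by
        calc C y ≤ C ((i ⊓ y) ⊔ iᶜ) := hmono hy
          _ = C (i ⊓ y) ⊔ C iᶜ := hadd _ _
          _ = C (i ⊓ y) ⊔ iᶜ := by rw [hiopen]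
      calc i ⊓ C y ≤ i ⊓ (C (i ⊓ y) ⊔ iᶜ) := inf_le_inf_left i this
        _ = (i ⊓ C (i ⊓ y)) ⊔ (i ⊓ iᶜ) := inf_sup_left _ _ _
        _ ≤ C (i ⊓ y) := by rw [inf_compl_eq_bot, sup_bot_eq]; exact inf_le_right
    rw [hCt]
    apply le_sSup
    show i ⊓ a ≤ Γ.inf (fun γ => C (γ ⊓ (i ⊓ a)))
    apply Finset.le_inf
    intro γ hγ
    have hia : i ⊓ a ≤ m := by
      calc i ⊓ a ≤ (aᶜ ⊔ m) ⊓ a := inf_le_inf_right a hile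
        _ = (aᶜ ⊓ a) ⊔ (m ⊓ a) := inf_sup_right _ _ _
        _ = m ⊓ a := by rw [compl_inf_eq_bot, bot_sup_eq]
        _ ≤ m := inf_le_left
    have h1 : i ⊓ a ≤ i ⊓ C (γ ⊓ a) :=
      le_inf inf_le_left (hia.trans (Finset.inf_le hγ))
    have h2 : i ⊓ (γ ⊓ a) = γ ⊓ (i ⊓ a) := by
      rw [inf_left_comm]
    exact h1.trans ((hdist (γ ⊓ a)).trans (le_of_eq (by rw [h2])))
  refine ⟨?_, fun Γ _ => hfix Γ, fun Γ a _ => hind Γ a, ?_⟩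
  · intro a
    rw [hCt]
    apply le_antisymm
    · apply sSup_le
      intro b hb
      simp only [Set.mem_setOf_eq, Finset.inf_singleton] at hb
      exact hb.trans (hmono inf_le_left)
    · apply le_sSup
      simp only [Set.mem_setOf_eq, Finset.inf_singleton]
      rw [inf_eq_left.mpr (hinfl a)]
  · intro Ct' _ hfix' hind' Γ hne
    apply le_antisymm
    · rw [hCt]
      exact le_sSup (hfix' Γ hne)
    · have hle : Ct Γ ≤ Γ.inf (fun γ => C (γ ⊓ Ct Γ)) := hfix Γ
      have htop : (Ct Γ)ᶜ ⊔ Γ.inf (fun γ => C (γ ⊓ Ct Γ)) = ⊤ := by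
        rw [eq_top_iff, ← compl_sup_eq_top (x := Ct Γ)]
        exact sup_le_sup_left hle _
      have := hind' Γ (Ct Γ) hne
      rwa [htop, compl_top, hbot, compl_bot, top_inf_eq] at this
end

section
/- In a complete closure algebra, defining Cᵗ Γ = ⋁{a : a ≤ ⋀_{γ∈Γ} C(γ ∧ a)}, for any a and Γ the element I b ∧ a is a post-fixed point for Γ, where b = a ⇒ ⋀_{γ∈Γ} C(γ ∧ a); hence the Ind inequality I b ∧ a ≤ Cᵗ Γ holds. -/
theorem stmt_6 {A : Type*} [CompleteBooleanAlgebra A] (C : A → A)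
    (hadd : ∀ a b, C (a ⊔ b) = C a ⊔ C b)
    (hbot : C ⊥ = ⊥)
    (hinfl : ∀ a, a ≤ C a)
    (hidem : ∀ a, C (C a) = C a)
    (Γ : Finset A) (a b : A)
    (hb : b = aᶜ ⊔ Γ.inf (fun γ => C (γ ⊓ a))) :
    (C bᶜ)ᶜ ⊓ a ≤ Γ.inf (fun γ => C (γ ⊓ ((C bᶜ)ᶜ ⊓ a))) ∧
    (C bᶜ)ᶜ ⊓ a ≤ sSup {c : A | c ≤ Γ.inf (fun γ => C (γ ⊓ c))} := by
  have mono : ∀ x y : A, x ≤ y → C x ≤ C y := by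
    intro x y h
    have := hadd x y
    rw [sup_eq_right.mpr h] at this
    rw [this]; exact le_sup_left
  set i : A := (C bᶜ)ᶜ with hi
  have hib : i ≤ b := by
    have : bᶜ ≤ C bᶜ := hinfl _
    calc i ≤ bᶜᶜ := compl_le_compl this
    _ = b := compl_compl b
  have main : i ⊓ a ≤ Γ.inf (fun γ => C (γ ⊓ (i ⊓ a))) := by
    apply Finset.le_inf
    intro γ hγ
    have h1 : i ⊓ a ≤ C (γ ⊓ a) := by
      calc i ⊓ a ≤ b ⊓ a := inf_le_inf_right a hib
      _ = (aᶜ ⊔ Γ.inf (fun γ => C (γ ⊓ a))) ⊓ a := by rw [hb]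
      _ = aᶜ ⊓ a ⊔ Γ.inf (fun γ => C (γ ⊓ a)) ⊓ a := by rw [inf_sup_right]
      _ ≤ Γ.inf (fun γ => C (γ ⊓ a)) := by
          simp only [compl_inf_eq_bot, bot_sup_eq]
          exact inf_le_left
      _ ≤ C (γ ⊓ a) := Finset.inf_le hγ
    have hsplit : γ ⊓ a = (γ ⊓ a ⊓ i) ⊔ (γ ⊓ a ⊓ C bᶜ) := by
      have : iᶜ = C bᶜ := compl_compl _
      rw [← this, ← inf_sup_left, sup_compl_eq_top, inf_top_eq]
    have h2 : C (γ ⊓ a) ≤ C (γ ⊓ a ⊓ i) ⊔ C bᶜ := by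
      have he : C (γ ⊓ a) = C (γ ⊓ a ⊓ i) ⊔ C (γ ⊓ a ⊓ C bᶜ) := by
        rw [← hadd, ← hsplit]
      rw [he]
      apply sup_le_sup_left _ _
      calc C (γ ⊓ a ⊓ C bᶜ) ≤ C (C bᶜ) := mono _ _ inf_le_right
      _ = C bᶜ := hidem _
    have h3 : i ⊓ a ≤ i ⊓ (C (γ ⊓ a ⊓ i) ⊔ C bᶜ) :=
      le_inf inf_le_left (le_trans h1 h2)
    have h4 : i ⊓ (C (γ ⊓ a ⊓ i) ⊔ C bᶜ) ≤ C (γ ⊓ a ⊓ i) := by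
      rw [inf_sup_left]
      apply sup_le inf_le_right
      simp [hi]
    have h5 : γ ⊓ a ⊓ i = γ ⊓ (i ⊓ a) := by
      rw [inf_assoc, inf_comm a i]
    exact le_trans h3 (h5 ▸ h4)
  exact ⟨main, le_sSup (show i ⊓ a ∈ {c : A | c ≤ Γ.inf (fun γ => C (γ ⊓ c))} from main)⟩
end

section
/- In any tangled closure algebra, Cᵗ Γ is a closed element: C(Cᵗ Γ) = Cᵗ Γ. -/
theorem stmt_7 {A : Type*} [BooleanAlgebra A]
    (Ct : Finset A → A) (C : A → A)
    (hC : ∀ a, C a = Ct {a})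
    (hadd : ∀ a b, C (a ⊔ b) = C a ⊔ C b)
    (hbot : C ⊥ = ⊥)
    (hinfl : ∀ a, a ≤ C a)
    (hidem : ∀ a, C (C a) = C a)
    (hFix : ∀ Γ : Finset A, Γ.Nonempty → Ct Γ ≤ Γ.inf (fun γ => C (γ ⊓ Ct Γ)))
    (hInd : ∀ (Γ : Finset A) (a : A), Γ.Nonempty →
      (C ((aᶜ ⊔ Γ.inf (fun γ => C (γ ⊓ a)))ᶜ))ᶜ ⊓ a ≤ Ct Γ)
    (Γ : Finset A) (hne : Γ.Nonempty) :
    C (Ct Γ) = Ct Γ := by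
  have hmono : ∀ a b : A, a ≤ b → C a ≤ C b := by
    intro a b h
    have := hadd a b
    rw [sup_eq_right.mpr h] at this
    rw [this]; exact le_sup_left
  set a := C (Ct Γ) with ha
  -- key: a ≤ Γ.inf (fun γ => C (γ ⊓ a))
  have hkey : a ≤ Γ.inf (fun γ => C (γ ⊓ a)) := by
    apply Finset.le_inf
    intro γ hγ
    have h1 : a ≤ C (Γ.inf (fun γ => C (γ ⊓ Ct Γ))) := hmono _ _ (hFix Γ hne)
    have h2 : C (Γ.inf (fun γ => C (γ ⊓ Ct Γ))) ≤ C (C (γ ⊓ Ct Γ)) :=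
      hmono _ _ (Finset.inf_le hγ)
    have h3 : C (C (γ ⊓ Ct Γ)) = C (γ ⊓ Ct Γ) := hidem _
    have h4 : C (γ ⊓ Ct Γ) ≤ C (γ ⊓ a) :=
      hmono _ _ (inf_le_inf_left _ (hinfl _))
    exact h1.trans (h2.trans (h3.le.trans h4))
  have htop : aᶜ ⊔ Γ.inf (fun γ => C (γ ⊓ a)) = ⊤ :=
    top_le_iff.mp (by rw [← compl_sup_eq_top (x := a)]; exact sup_le_sup_left hkey _)
  have hle : a ≤ Ct Γ := by
    have := hInd Γ a hne
    rw [htop, compl_top, hbot, compl_bot, top_inf_eq] at this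
    exact this
  exact le_antisymm hle (hinfl _)
end

section
/- In any tangled closure algebra, if Γ' = {γ' : γ ∈ Γ} is obtained by replacing each γ ∈ Γ with some γ', then ⋀_{γ∈Γ} I(γ ⇔ γ') ≤ I(Cᵗ Γ ⇔ Cᵗ Γ'), where a ⇔ b = (a ⇒ b) ∧ (b ⇒ a). -/
theorem stmt_8 {A : Type*} [BooleanAlgebra A] [DecidableEq A]
    (Ct : Finset A → A) (C : A → A)
    (hC : ∀ a, C a = Ct {a})
    (hadd : ∀ a b, C (a ⊔ b) = C a ⊔ C b)
    (hbot : C ⊥ = ⊥)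
    (hinfl : ∀ a, a ≤ C a)
    (hidem : ∀ a, C (C a) = C a)
    (hFix : ∀ Γ : Finset A, Γ.Nonempty → Ct Γ ≤ Γ.inf (fun γ => C (γ ⊓ Ct Γ)))
    (hInd : ∀ (Γ : Finset A) (a : A), Γ.Nonempty →
      (C ((aᶜ ⊔ Γ.inf (fun γ => C (γ ⊓ a)))ᶜ))ᶜ ⊓ a ≤ Ct Γ)
    (Γ : Finset A) (hne : Γ.Nonempty) (g : A → A) :
    Γ.inf (fun γ => (C (((γᶜ ⊔ g γ) ⊓ ((g γ)ᶜ ⊔ γ))ᶜ))ᶜ) ≤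
      (C ((((Ct Γ)ᶜ ⊔ Ct (Γ.image g)) ⊓ ((Ct (Γ.image g))ᶜ ⊔ Ct Γ))ᶜ))ᶜ := by
  -- basic Boolean implication lemmas
  have imp1 : ∀ x y z : A, x ≤ yᶜ ⊔ z → x ⊓ y ≤ z := by
    intro x y z h
    calc x ⊓ y ≤ (yᶜ ⊔ z) ⊓ y := inf_le_inf_right y h
      _ = (yᶜ ⊓ y) ⊔ (z ⊓ y) := by rw [inf_sup_right]
      _ ≤ z := by simp
  have imp2 : ∀ x y z : A, x ⊓ y ≤ z → x ≤ yᶜ ⊔ z := by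
    intro x y z h
    calc x = x ⊓ (y ⊔ yᶜ) := by simp
      _ = (x ⊓ y) ⊔ (x ⊓ yᶜ) := by rw [inf_sup_left]
      _ ≤ yᶜ ⊔ z := sup_le (le_trans h le_sup_right) (le_trans inf_le_right le_sup_left)
  -- monotonicity of C
  have Cmono : ∀ {a b : A}, a ≤ b → C a ≤ C b := by
    intro a b h
    have h2 := hadd a b
    rw [sup_eq_right.mpr h] at h2
    rw [h2]; exact le_sup_left
  -- interior is deflationary
  have Iinfl : ∀ a : A, (C aᶜ)ᶜ ≤ a := by
    intro a
    have := compl_le_compl (hinfl aᶜ)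
    rwa [compl_compl] at this
  -- monotonicity of interior
  have Imono : ∀ {a b : A}, a ≤ b → (C aᶜ)ᶜ ≤ (C bᶜ)ᶜ :=
    fun h => compl_le_compl (Cmono (compl_le_compl h))
  -- interior distributes over finite infs
  have Iinf : ∀ (s : Finset A) (f : A → A),
      (C (s.inf f)ᶜ)ᶜ = s.inf (fun x => (C (f x)ᶜ)ᶜ) := by
    intro s f
    induction s using Finset.induction_on with
    | empty => simp [hbot]
    | @insert a s ha ih =>
        rw [Finset.inf_insert, Finset.inf_insert, compl_inf, hadd, compl_sup, ih]
  -- open element meets closure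
  have omc : ∀ d b : A, d ≤ (C dᶜ)ᶜ → d ⊓ C b ≤ C (d ⊓ b) := by
    intro d b hd
    have hb : C b = C (b ⊓ d) ⊔ C (b ⊓ dᶜ) := by
      rw [← hadd, ← inf_sup_left, sup_compl_eq_top, inf_top_eq]
    have h1 : d ⊓ C (b ⊓ dᶜ) ≤ ⊥ := by
      calc d ⊓ C (b ⊓ dᶜ) ≤ (C dᶜ)ᶜ ⊓ C dᶜ :=
            inf_le_inf hd (Cmono inf_le_right)
        _ = ⊥ := by simp
    calc d ⊓ C b = (d ⊓ C (b ⊓ d)) ⊔ (d ⊓ C (b ⊓ dᶜ)) := by rw [hb, inf_sup_left]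
      _ ≤ C (b ⊓ d) ⊔ ⊥ := sup_le_sup inf_le_right h1
      _ = C (d ⊓ b) := by rw [sup_bot_eq, inf_comm]
  -- the element d
  set e : A → A := fun γ => (γᶜ ⊔ g γ) ⊓ ((g γ)ᶜ ⊔ γ) with he
  set d : A := Γ.inf (fun γ => (C (e γ)ᶜ)ᶜ) with hd
  -- d is open
  have dopen : d ≤ (C dᶜ)ᶜ := by
    rw [hd, Iinf]
    refine Finset.le_inf fun γ hγ => le_trans (Finset.inf_le hγ) (le_of_eq ?_)
    simp [compl_compl, hidem]
  -- d is below each equivalence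
  have dle : ∀ γ ∈ Γ, d ≤ e γ := fun γ hγ =>
    le_trans (Finset.inf_le hγ) (Iinfl (e γ))
  -- main claim, stated symmetrically
  have claim : ∀ X Y : Finset A, X.Nonempty → Y.Nonempty →
      (∀ γ ∈ Y, ∃ γ' ∈ X, d ⊓ γ' ≤ γ) → d ⊓ Ct X ≤ Ct Y := by
    intro X Y hX hY hcover
    set a : A := d ⊓ Ct X with ha
    have hkey : ∀ γ ∈ Y, a ≤ C (γ ⊓ a) := by
      intro γ hγ
      obtain ⟨γ', hγ', hle⟩ := hcover γ hγ
      have h1 : Ct X ≤ C (γ' ⊓ Ct X) := le_trans (hFix X hX) (Finset.inf_le hγ')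
      have h2 : d ⊓ (γ' ⊓ Ct X) ≤ γ ⊓ a := by
        refine le_inf ?_ ?_
        · calc d ⊓ (γ' ⊓ Ct X) ≤ d ⊓ γ' := inf_le_inf_left d inf_le_left
            _ ≤ γ := hle
        · exact inf_le_inf_left d inf_le_right
      calc a ≤ d ⊓ C (γ' ⊓ Ct X) := inf_le_inf_left d h1
        _ ≤ C (d ⊓ (γ' ⊓ Ct X)) := omc d _ dopen
        _ ≤ C (γ ⊓ a) := Cmono h2
    have hsup : aᶜ ⊔ Y.inf (fun γ => C (γ ⊓ a)) = ⊤ := by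
      refine top_le_iff.mp ?_
      calc (⊤ : A) = aᶜ ⊔ a := (compl_sup_eq_top).symm
        _ ≤ aᶜ ⊔ Y.inf (fun γ => C (γ ⊓ a)) :=
            sup_le_sup_left (Finset.le_inf hkey) _
    have := hInd Y a hY
    rw [hsup] at this
    simpa [hbot] using this
  -- the two directions
  have hgne : (Γ.image g).Nonempty := hne.image g
  have c1 : d ⊓ Ct Γ ≤ Ct (Γ.image g) := by
    refine claim Γ (Γ.image g) hne hgne ?_
    intro γ' hγ'
    obtain ⟨γ, hγ, rfl⟩ := Finset.mem_image.mp hγ'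
    exact ⟨γ, hγ, imp1 d γ (g γ) (le_trans (dle γ hγ) inf_le_left)⟩
  have c2 : d ⊓ Ct (Γ.image g) ≤ Ct Γ := by
    refine claim (Γ.image g) Γ hgne hne ?_
    intro γ hγ
    exact ⟨g γ, Finset.mem_image_of_mem g hγ,
      imp1 d (g γ) γ (le_trans (dle γ hγ) inf_le_right)⟩
  -- conclude
  have hdle : d ≤ ((Ct Γ)ᶜ ⊔ Ct (Γ.image g)) ⊓ ((Ct (Γ.image g))ᶜ ⊔ Ct Γ) :=
    le_inf (imp2 _ _ _ c1) (imp2 _ _ _ c2)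
  exact le_trans dopen (Imono hdle)
end

section
/- Let (S, R) be a quasi-ordered set and Γ a finite nonempty family of subsets of S. Then x ∈ ⋃{a ⊆ S : a ⊆ ⋂_{γ∈Γ} R⁻¹(γ ∩ a)} if and only if there exists an endless R-path x = x₀ R x₁ R x₂ R ⋯ such that for each γ ∈ Γ there are infinitely many n with x_n ∈ γ. -/
/-!
A set `a` with `a ⊆ ⋂ γ ∈ Γ, R⁻¹(γ ∩ a)` lets one step from any of its points, by `R`, into any
prescribed `γ ∈ Γ` without leaving `a`; prescribing a sequence of targets that lists every member
of the countable family `Γ` infinitely often yields the required path. Conversely, by transitivity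
the range of such a path is a set of this kind.
-/

section

open Set

variable {S : Type*} (R : S → S → Prop)

/-- The sets `a ⊆ ⋂ γ ∈ Γ, R⁻¹(γ ∩ a)`. -/
def IsRecurrent (Γ : Set (Set S)) (a : Set S) : Prop :=
  ∀ z ∈ a, ∀ γ ∈ Γ, ∃ y ∈ γ ∩ a, R z y

variable {R}

theorem Set.Countable.exists_seq_frequently_eq {α : Type*} {s : Set α} (hc : s.Countable)
    (hs : s.Nonempty) : ∃ c : ℕ → α, (∀ n, c n ∈ s) ∧ ∀ a ∈ s, ∀ N, ∃ n ≥ N, c n = a := by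
  obtain ⟨f, rfl⟩ := hc.exists_eq_range hs
  refine ⟨fun n => f n.unpair.1, fun n => mem_range_self _, ?_⟩
  rintro _ ⟨k, rfl⟩ N
  exact ⟨Nat.pair k N, Nat.right_le_pair k N, by simp only [Nat.unpair_pair]⟩

theorem IsRecurrent.exists_path_through {Γ : Set (Set S)} {a : Set S} (ha : IsRecurrent R Γ a)
    {c : ℕ → Set S} (hc : ∀ n, c n ∈ Γ) {x : S} (hx : x ∈ a) :
    ∃ p : ℕ → S, p 0 = x ∧ ∀ n, R (p n) (p (n + 1)) ∧ p (n + 1) ∈ c n := by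
  choose! g hg using fun z hz n => ha z hz (c n) (hc n)
  let p : ℕ → S := fun n => Nat.rec x (fun k z => g z k) n
  have hpa : ∀ n, p n ∈ a := by
    intro n
    induction n with
    | zero => exact hx
    | succ k ih => exact (hg _ ih k).1.2
  exact ⟨p, rfl, fun n => ⟨(hg _ (hpa n) n).2, (hg _ (hpa n) n).1.1⟩⟩

theorem IsRecurrent.exists_path_frequently_mem {Γ : Set (Set S)} (hΓc : Γ.Countable)
    (hΓ : Γ.Nonempty) {a : Set S} (ha : IsRecurrent R Γ a) {x : S} (hx : x ∈ a) :
    ∃ p : ℕ → S, p 0 = x ∧ (∀ n, R (p n) (p (n + 1))) ∧ ∀ γ ∈ Γ, ∀ N, ∃ n ≥ N, p n ∈ γ := by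
  obtain ⟨c, hcΓ, hc⟩ := hΓc.exists_seq_frequently_eq hΓ
  obtain ⟨p, hp0, hp⟩ := ha.exists_path_through hcΓ hx
  refine ⟨p, hp0, fun n => (hp n).1, fun γ hγ N => ?_⟩
  obtain ⟨n, hnN, rfl⟩ := hc γ hγ N
  exact ⟨n + 1, by omega, (hp n).2⟩

theorem isRecurrent_range_of_frequently_mem [IsTrans S R] {Γ : Set (Set S)}
    {p : ℕ → S} (hp : ∀ n, R (p n) (p (n + 1))) (hfreq : ∀ γ ∈ Γ, ∀ N, ∃ n ≥ N, p n ∈ γ) :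
    IsRecurrent R Γ (range p) := by
  rintro _ ⟨n, rfl⟩ γ hγ
  obtain ⟨m, hnm, hmγ⟩ := hfreq γ hγ (n + 1)
  exact ⟨p m, ⟨hmγ, mem_range_self m⟩, Nat.rel_of_forall_rel_succ_of_lt R hp hnm⟩

theorem exists_isRecurrent_mem_iff [IsTrans S R] {Γ : Set (Set S)}
    (hΓc : Γ.Countable) (hΓ : Γ.Nonempty) (x : S) :
    (∃ a, IsRecurrent R Γ a ∧ x ∈ a) ↔
      ∃ p : ℕ → S, p 0 = x ∧ (∀ n, R (p n) (p (n + 1))) ∧ ∀ γ ∈ Γ, ∀ N, ∃ n ≥ N, p n ∈ γ := by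
  constructor
  · rintro ⟨a, ha, hx⟩
    exact ha.exists_path_frequently_mem hΓc hΓ hx
  · rintro ⟨p, rfl, hp, hfreq⟩
    exact ⟨range p, isRecurrent_range_of_frequently_mem hp hfreq, mem_range_self 0⟩

end

theorem stmt_10_general {S : Type*} (R : S → S → Prop)
    (htrans : Transitive R)
    (Γ : Finset (Set S)) (hne : Γ.Nonempty) (x : S) :
    x ∈ ⋃₀ {a : Set S | a ⊆ ⋂ γ ∈ Γ, {z | ∃ y, y ∈ γ ∩ a ∧ R z y}} ↔
      ∃ p : ℕ → S, p 0 = x ∧ (∀ n, R (p n) (p (n + 1))) ∧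
        ∀ γ ∈ Γ, ∀ N : ℕ, ∃ n ≥ N, p n ∈ γ := by
  have hrec : ∀ a : Set S,
      a ⊆ ⋂ γ ∈ Γ, {z | ∃ y, y ∈ γ ∩ a ∧ R z y} ↔ IsRecurrent R (Γ : Set (Set S)) a := by
    intro a
    simp only [Set.subset_def, Set.mem_iInter₂, Set.mem_ofPred_eq, IsRecurrent, Finset.mem_coe]
  have : IsTrans S R := ⟨htrans⟩
  simp only [Set.mem_sUnion, Set.mem_ofPred_eq, hrec]
  exact exists_isRecurrent_mem_iff Γ.countable_toSet (by simpa using hne) x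

theorem stmt_10 {S : Type*} (R : S → S → Prop)
    (hrefl : Reflexive R) (htrans : Transitive R)
    (Γ : Finset (Set S)) (hne : Γ.Nonempty) (x : S) :
    x ∈ ⋃₀ {a : Set S | a ⊆ ⋂ γ ∈ Γ, {z | ∃ y, y ∈ γ ∩ a ∧ R z y}} ↔
      ∃ p : ℕ → S, p 0 = x ∧ (∀ n, R (p n) (p (n + 1))) ∧
        ∀ γ ∈ Γ, ∀ N : ℕ, ∃ n ≥ N, p n ∈ γ :=
  stmt_10_general R htrans Γ hne x
end

section
/- Let (A, Cᵗ_A) and (B, Cᵗ_B) be tangled closure algebras with A finite, and let f : A → B be a Boolean homomorphism preserving the induced closure operators (f(C_A a) = C_B(f a)). Then f preserves tangled closure: f(Cᵗ_A Γ) = Cᵗ_B {f γ : γ ∈ Γ} for every finite nonempty Γ ⊆ A. -/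
/-!
By (Fix) and (Ind), `Cᵗ Γ` is the greatest element `a` with `a ≤ C (γ ⊓ a)` for all `γ ∈ Γ`
(`TangleDense C Γ a`). A closure-preserving homomorphism `f` sends such elements of `A` to
such elements of `B`, which gives `f (Cᵗ_A Γ) ≤ Cᵗ_B (f Γ)`. Since `A` is finite, `f` has a lower adjoint `g`
(`g y` is the meet of all `a` with `y ≤ f a`), and `g` sends such elements of `B` back to such
elements of `A`; hence `g (Cᵗ_B (f Γ)) ≤ Cᵗ_A Γ`, which is the reverse inequality.
-/

open Finset

section TangleDense

variable {α β : Type*} [BooleanAlgebra α] [BooleanAlgebra β]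

def TangleDense (C : α → α) (Γ : Finset α) (a : α) : Prop :=
  ∀ γ ∈ Γ, a ≤ C (γ ⊓ a)

theorem tangleDense_tangle {Ct : Finset α → α} {C : α → α}
    (hFix : ∀ Γ : Finset α, Γ.Nonempty → Ct Γ ≤ Γ.inf (fun γ => C (γ ⊓ Ct Γ)))
    {Γ : Finset α} (hΓ : Γ.Nonempty) : TangleDense C Γ (Ct Γ) :=
  fun _ hγ => (hFix Γ hΓ).trans (inf_le hγ)

/-- For a tangle-dense `a` the antecedent of (Ind) is `I ⊤ = (C ⊥)ᶜ = ⊤`. -/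
theorem TangleDense.le_tangle {Ct : Finset α → α} {C : α → α} (hbot : C ⊥ = ⊥)
    (hInd : ∀ (Γ : Finset α) (a : α), Γ.Nonempty →
      (C ((aᶜ ⊔ Γ.inf (fun γ => C (γ ⊓ a)))ᶜ))ᶜ ⊓ a ≤ Ct Γ)
    {Γ : Finset α} (hΓ : Γ.Nonempty) {a : α} (ha : TangleDense C Γ a) : a ≤ Ct Γ := by
  have hImp : aᶜ ⊔ Γ.inf (fun γ => C (γ ⊓ a)) = ⊤ :=
    top_le_iff.mp (compl_sup_eq_top (x := a) ▸ sup_le_sup_left (Finset.le_inf ha) _)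
  simpa [hImp, hbot] using hInd Γ a hΓ

variable [DecidableEq β] {CA : α → α} {CB : β → β} {f : α → β}

theorem TangleDense.image (hf : Monotone f) (hinf : ∀ a b, f (a ⊓ b) = f a ⊓ f b)
    (hclos : ∀ a, f (CA a) = CB (f a)) {Γ : Finset α} {a : α} (ha : TangleDense CA Γ a) :
    TangleDense CB (Γ.image f) (f a) := by
  simp only [TangleDense, forall_mem_image]
  intro γ hγ
  simpa only [hclos, hinf] using hf (ha γ hγ)

theorem TangleDense.of_image {g : β → α} (hgf : GaloisConnection g f) (hCB : Monotone CB)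
    (hinf : ∀ a b, f (a ⊓ b) = f a ⊓ f b) (hclos : ∀ a, f (CA a) = CB (f a))
    {Γ : Finset α} {b : β} (hb : TangleDense CB (Γ.image f) b) : TangleDense CA Γ (g b) := by
  intro γ hγ
  rw [hgf.le_iff_le, hclos, hinf]
  exact (hb _ (mem_image_of_mem f hγ)).trans (hCB (inf_le_inf_left _ (hgf.le_u_l b)))

end TangleDense

theorem exists_galoisConnection_of_finite {α β : Type*} [Fintype α] [SemilatticeInf α]
    [OrderTop α] [SemilatticeInf β] [OrderTop β] {f : α → β}
    (hinf : ∀ a b, f (a ⊓ b) = f a ⊓ f b) (htop : f ⊤ = ⊤) :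
    ∃ g : β → α, GaloisConnection g f := by
  classical
  let F : InfTopHom α β := ⟨⟨f, hinf⟩, htop⟩
  refine ⟨fun y => (univ.filter (y ≤ f ·)).inf id, fun y a => ⟨fun h => ?_, fun h => ?_⟩⟩
  · refine le_trans ?_ (OrderHomClass.monotone F h)
    rw [map_finset_inf]
    exact Finset.le_inf fun b hb => (mem_filter.mp hb).2
  · exact inf_le (mem_filter.mpr ⟨mem_univ a, h⟩)

theorem stmt_12_general {A B : Type*} [BooleanAlgebra A] [BooleanAlgebra B]
    [Fintype A] [DecidableEq B]
    (CtA : Finset A → A) (CA : A → A)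
    (hbotA : CA ⊥ = ⊥)
    (hFixA : ∀ Γ : Finset A, Γ.Nonempty → CtA Γ ≤ Γ.inf (fun γ => CA (γ ⊓ CtA Γ)))
    (hIndA : ∀ (Γ : Finset A) (a : A), Γ.Nonempty →
      (CA ((aᶜ ⊔ Γ.inf (fun γ => CA (γ ⊓ a)))ᶜ))ᶜ ⊓ a ≤ CtA Γ)
    (CtB : Finset B → B) (CB : B → B)
    (haddB : ∀ a b, CB (a ⊔ b) = CB a ⊔ CB b)
    (hbotB : CB ⊥ = ⊥)
    (hFixB : ∀ Γ : Finset B, Γ.Nonempty → CtB Γ ≤ Γ.inf (fun γ => CB (γ ⊓ CtB Γ)))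
    (hIndB : ∀ (Γ : Finset B) (b : B), Γ.Nonempty →
      (CB ((bᶜ ⊔ Γ.inf (fun γ => CB (γ ⊓ b)))ᶜ))ᶜ ⊓ b ≤ CtB Γ)
    (f : A → B)
    (hinf : ∀ a b, f (a ⊓ b) = f a ⊓ f b)
    (htop : f ⊤ = ⊤)
    (hclos : ∀ a, f (CA a) = CB (f a))
    (Γ : Finset A) (hne : Γ.Nonempty) :
    f (CtA Γ) = CtB (Γ.image f) := by
  obtain ⟨g, hgf⟩ := exists_galoisConnection_of_finite hinf htop
  have hCB : Monotone CB := OrderHomClass.monotone (⟨CB, haddB⟩ : SupHom B B)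
  apply le_antisymm
  · exact ((tangleDense_tangle hFixA hne).image hgf.monotone_u hinf hclos).le_tangle hbotB hIndB
      (hne.image f)
  · rw [← hgf.le_iff_le]
    exact ((tangleDense_tangle hFixB (hne.image f)).of_image hgf hCB hinf hclos).le_tangle
      hbotA hIndA hne

theorem stmt_12 {A B : Type*} [BooleanAlgebra A] [BooleanAlgebra B]
    [Fintype A] [DecidableEq B]
    (CtA : Finset A → A) (CA : A → A)
    (hCA : ∀ a, CA a = CtA {a})
    (haddA : ∀ a b, CA (a ⊔ b) = CA a ⊔ CA b)
    (hbotA : CA ⊥ = ⊥)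
    (hinflA : ∀ a, a ≤ CA a)
    (hidemA : ∀ a, CA (CA a) = CA a)
    (hFixA : ∀ Γ : Finset A, Γ.Nonempty → CtA Γ ≤ Γ.inf (fun γ => CA (γ ⊓ CtA Γ)))
    (hIndA : ∀ (Γ : Finset A) (a : A), Γ.Nonempty →
      (CA ((aᶜ ⊔ Γ.inf (fun γ => CA (γ ⊓ a)))ᶜ))ᶜ ⊓ a ≤ CtA Γ)
    (CtB : Finset B → B) (CB : B → B)
    (hCB : ∀ b, CB b = CtB {b})
    (haddB : ∀ a b, CB (a ⊔ b) = CB a ⊔ CB b)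
    (hbotB : CB ⊥ = ⊥)
    (hinflB : ∀ b, b ≤ CB b)
    (hidemB : ∀ b, CB (CB b) = CB b)
    (hFixB : ∀ Γ : Finset B, Γ.Nonempty → CtB Γ ≤ Γ.inf (fun γ => CB (γ ⊓ CtB Γ)))
    (hIndB : ∀ (Γ : Finset B) (b : B), Γ.Nonempty →
      (CB ((bᶜ ⊔ Γ.inf (fun γ => CB (γ ⊓ b)))ᶜ))ᶜ ⊓ b ≤ CtB Γ)
    (f : A → B)
    (hinf : ∀ a b, f (a ⊓ b) = f a ⊓ f b)
    (hsup : ∀ a b, f (a ⊔ b) = f a ⊔ f b)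
    (hcompl : ∀ a, f aᶜ = (f a)ᶜ)
    (hbot : f ⊥ = ⊥) (htop : f ⊤ = ⊤)
    (hclos : ∀ a, f (CA a) = CB (f a))
    (Γ : Finset A) (hne : Γ.Nonempty) :
    f (CtA Γ) = CtB (Γ.image f) :=
  stmt_12_general CtA CA hbotA hFixA hIndA CtB CB haddB hbotB hFixB hIndB f hinf htop hclos Γ hne
end

section
/- Let (A, Cᵗ_A) be a tangled closure algebra and α an open element (I α = α). Then the relativised structure (A_α, Cᵗ_α), where A_α = {b ∈ A : b ≤ α} with relative complement α ∧ -b and Cᵗ_α Γ = α ∧ Cᵗ_A Γ, is a tangled closure algebra whose induced closure operator is C_α b = α ∧ C_A b. -/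
theorem stmt_13 {A : Type*} [BooleanAlgebra A]
    (Ct : Finset A → A) (C : A → A)
    (hC : ∀ a, C a = Ct {a})
    (hadd : ∀ a b, C (a ⊔ b) = C a ⊔ C b)
    (hbot : C ⊥ = ⊥)
    (hinfl : ∀ a, a ≤ C a)
    (hidem : ∀ a, C (C a) = C a)
    (hFix : ∀ Γ : Finset A, Γ.Nonempty → Ct Γ ≤ Γ.inf (fun γ => C (γ ⊓ Ct Γ)))
    (hInd : ∀ (Γ : Finset A) (a : A), Γ.Nonempty →
      (C ((aᶜ ⊔ Γ.inf (fun γ => C (γ ⊓ a)))ᶜ))ᶜ ⊓ a ≤ Ct Γ)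
    (α : A) (hopen : (C αᶜ)ᶜ = α)
    (Cα : A → A) (hCα : ∀ b, Cα b = α ⊓ C b)
    (Ctα : Finset A → A) (hCtα : ∀ Γ, Ctα Γ = α ⊓ Ct Γ)
    (Iα : A → A) (hIα : ∀ b, Iα b = α ⊓ (Cα (α ⊓ bᶜ))ᶜ)
    (impα : A → A → A) (himpα : ∀ b c, impα b c = (α ⊓ bᶜ) ⊔ c) :
    (∀ b, b ≤ α → Ctα {b} = Cα b) ∧
    (∀ b c, b ≤ α → c ≤ α → Cα (b ⊔ c) = Cα b ⊔ Cα c) ∧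
    Cα ⊥ = ⊥ ∧
    (∀ b, b ≤ α → b ≤ Cα b) ∧
    (∀ b, b ≤ α → Cα (Cα b) = Cα b) ∧
    (∀ Γ : Finset A, Γ.Nonempty → (∀ γ ∈ Γ, γ ≤ α) →
      Ctα Γ ≤ Γ.inf (fun γ => Cα (γ ⊓ Ctα Γ))) ∧
    (∀ (Γ : Finset A) (b : A), Γ.Nonempty → (∀ γ ∈ Γ, γ ≤ α) → b ≤ α →
      Iα (impα b (Γ.inf (fun γ => Cα (γ ⊓ b)))) ⊓ b ≤ Ctα Γ) := by
  -- monotonicity of C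
  have hmono : ∀ a b : A, a ≤ b → C a ≤ C b := by
    intro a b h
    calc C a ≤ C a ⊔ C b := le_sup_left
      _ = C (a ⊔ b) := (hadd a b).symm
      _ = C b := by rw [sup_eq_right.mpr h]
  -- key property of open α
  have hkey : ∀ y : A, α ⊓ C y ≤ C (α ⊓ y) := by
    intro y
    have h1 : y ≤ (α ⊓ y) ⊔ αᶜ := by
      rw [sup_inf_right, sup_compl_eq_top, top_inf_eq]
      exact le_sup_left
    have h2 : C y ≤ C (α ⊓ y) ⊔ C αᶜ := by
      rw [← hadd]; exact hmono _ _ h1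
    have h3 : α ⊓ C αᶜ = ⊥ := by
      nth_rewrite 1 [← hopen]
      exact compl_inf_self _
    calc α ⊓ C y ≤ α ⊓ (C (α ⊓ y) ⊔ C αᶜ) := inf_le_inf_left α h2
      _ = (α ⊓ C (α ⊓ y)) ⊔ (α ⊓ C αᶜ) := inf_sup_left ..
      _ = α ⊓ C (α ⊓ y) := by rw [h3, sup_bot_eq]
      _ ≤ C (α ⊓ y) := inf_le_right
  refine ⟨?_, ?_, ?_, ?_, ?_, ?_, ?_⟩
  · intro b _; rw [hCtα, hCα, hC]
  · intro b c _ _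
    rw [hCα, hCα, hCα, hadd, inf_sup_left]
  · rw [hCα, hbot, inf_bot_eq]
  · intro b hb
    rw [hCα]; exact le_inf hb (hinfl b)
  · intro b _
    simp only [hCα]
    apply le_antisymm
    · apply inf_le_inf_left
      calc C (α ⊓ C b) ≤ C (C b) := hmono _ _ inf_le_right
        _ = C b := hidem b
    · exact le_inf inf_le_left (hinfl _)
  · intro Γ hne hsub
    apply Finset.le_inf
    intro γ hγ
    simp only [hCtα, hCα]
    have hγα : γ ⊓ (α ⊓ Ct Γ) = γ ⊓ Ct Γ := by
      rw [← inf_assoc, inf_eq_left.mpr (hsub γ hγ)]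
    rw [hγα]
    exact le_inf inf_le_left
      (inf_le_right.trans ((hFix Γ hne).trans (Finset.inf_le hγ)))
  · intro Γ b hne hsub hb
    set e := Γ.inf (fun γ => C (γ ⊓ b)) with he
    have hd : Γ.inf (fun γ => Cα (γ ⊓ b)) = α ⊓ e := by
      apply le_antisymm
      · obtain ⟨γ0, hγ0⟩ := hne
        refine le_inf ((Finset.inf_le hγ0).trans ?_) (Finset.le_inf fun γ hγ => (Finset.inf_le hγ).trans ?_)
        · rw [hCα]; exact inf_le_left
        · rw [hCα]; exact inf_le_right
      · apply Finset.le_inf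
        intro γ hγ
        rw [hCα]
        exact inf_le_inf_left α (Finset.inf_le hγ)
    set y := (bᶜ ⊔ e)ᶜ with hy
    have hx : impα b (Γ.inf (fun γ => Cα (γ ⊓ b))) = α ⊓ (bᶜ ⊔ e) := by
      rw [himpα, hd, ← inf_sup_left]
    have hxc : α ⊓ (impα b (Γ.inf (fun γ => Cα (γ ⊓ b))))ᶜ = α ⊓ y := by
      rw [hx, compl_inf, inf_sup_left, inf_compl_eq_bot, bot_sup_eq, hy]
    have hIle : Iα (impα b (Γ.inf (fun γ => Cα (γ ⊓ b)))) ≤ (C y)ᶜ := by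
      rw [hIα, hxc, hCα]
      have h1 : α ⊓ C y ≤ α ⊓ C (α ⊓ y) := le_inf inf_le_left (hkey y)
      have h2 : (α ⊓ C (α ⊓ y))ᶜ ≤ (α ⊓ C y)ᶜ := compl_le_compl h1
      calc α ⊓ (α ⊓ C (α ⊓ y))ᶜ ≤ α ⊓ (α ⊓ C y)ᶜ := inf_le_inf_left α h2
        _ = α ⊓ (αᶜ ⊔ (C y)ᶜ) := by rw [compl_inf]
        _ = (α ⊓ αᶜ) ⊔ (α ⊓ (C y)ᶜ) := inf_sup_left ..
        _ ≤ (C y)ᶜ := by rw [inf_compl_eq_bot, bot_sup_eq]; exact inf_le_right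
    rw [hCtα]
    refine le_inf ?_ ?_
    · exact inf_le_left.trans (by rw [hIα]; exact inf_le_left)
    · calc Iα (impα b (Γ.inf (fun γ => Cα (γ ⊓ b)))) ⊓ b ≤ (C y)ᶜ ⊓ b :=
        inf_le_inf_right b hIle
        _ ≤ Ct Γ := hInd Γ b hne
end

section
/- Let (A, C_A) be a closure algebra and B a complete Boolean algebra containing A as a dense subalgebra. Define C_B b = ⋀_B {C_A a : b ≤ a, a ∈ A}. Then C_B is a closure operator on B extending C_A. -/
theorem stmt_15 {B : Type*} [CompleteBooleanAlgebra B]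
    (S : Set B)
    (hbotS : ⊥ ∈ S) (htopS : ⊤ ∈ S)
    (hinfS : ∀ a ∈ S, ∀ b ∈ S, a ⊓ b ∈ S)
    (hsupS : ∀ a ∈ S, ∀ b ∈ S, a ⊔ b ∈ S)
    (hcomplS : ∀ a ∈ S, aᶜ ∈ S)
    (hdense : ∀ b : B, b ≠ ⊥ → ∃ a ∈ S, a ≠ ⊥ ∧ a ≤ b)
    (CA : B → B)
    (hmemS : ∀ a ∈ S, CA a ∈ S)
    (haddA : ∀ a ∈ S, ∀ b ∈ S, CA (a ⊔ b) = CA a ⊔ CA b)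
    (hbotA : CA ⊥ = ⊥)
    (hinflA : ∀ a ∈ S, a ≤ CA a)
    (hidemA : ∀ a ∈ S, CA (CA a) = CA a)
    (CB : B → B)
    (hCB : ∀ b : B, CB b = sInf {c : B | ∃ a ∈ S, c = CA a ∧ b ≤ a}) :
    (∀ a b : B, CB (a ⊔ b) = CB a ⊔ CB b) ∧
    CB ⊥ = ⊥ ∧
    (∀ b : B, b ≤ CB b) ∧
    (∀ b : B, CB (CB b) = CB b) ∧
    (∀ a ∈ S, CB a = CA a) := by
  have hmono : ∀ a ∈ S, ∀ b ∈ S, a ≤ b → CA a ≤ CA b := by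
    intro a ha b hb hab
    have h : CA b = CA a ⊔ CA b := by
      rw [← haddA a ha b hb, sup_eq_right.mpr hab]
    rw [h]; exact le_sup_left
  have hCBle : ∀ b : B, ∀ a ∈ S, b ≤ a → CB b ≤ CA a := by
    intro b a ha hba
    rw [hCB]
    exact sInf_le ⟨a, ha, rfl, hba⟩
  have hext : ∀ a ∈ S, CB a = CA a := by
    intro a ha
    refine le_antisymm (hCBle a a ha le_rfl) ?_
    rw [hCB]
    refine le_sInf ?_
    rintro c ⟨a', ha', rfl, haa'⟩
    exact hmono a ha a' ha' haa'
  have hCBmono : ∀ x y : B, x ≤ y → CB x ≤ CB y := by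
    intro x y hxy
    rw [hCB, hCB]
    refine le_sInf ?_
    rintro c ⟨a, ha, rfl, hya⟩
    exact sInf_le ⟨a, ha, rfl, hxy.trans hya⟩
  have hinfl : ∀ b : B, b ≤ CB b := by
    intro b
    rw [hCB]
    refine le_sInf ?_
    rintro c ⟨a, ha, rfl, hba⟩
    exact hba.trans (hinflA a ha)
  refine ⟨?_, ?_, hinfl, ?_, hext⟩
  · intro a b
    refine le_antisymm ?_ (sup_le (hCBmono _ _ le_sup_left) (hCBmono _ _ le_sup_right))
    rw [hCB a, hCB b, sInf_sup_sInf]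
    refine le_iInf₂ ?_
    rintro ⟨c, d⟩ ⟨⟨a', ha', rfl, haa'⟩, ⟨b', hb', rfl, hbb'⟩⟩
    have h1 : CB (a ⊔ b) ≤ CA (a' ⊔ b') :=
      hCBle _ _ (hsupS a' ha' b' hb') (sup_le_sup haa' hbb')
    rwa [haddA a' ha' b' hb'] at h1
  · exact le_antisymm ((hCBle ⊥ ⊥ hbotS le_rfl).trans_eq hbotA) bot_le
  · intro b
    refine le_antisymm ?_ (hinfl _)
    conv_rhs => rw [hCB]
    refine le_sInf ?_
    rintro c ⟨a, ha, rfl, hba⟩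
    have h1 : CB (CB b) ≤ CB (CA a) := hCBmono _ _ (hCBle b a ha hba)
    rwa [hext (CA a) (hmemS a ha), hidemA a ha] at h1
end

section
/- Every finite closure algebra (A, C) is isomorphic to the closure algebra (P(S), R⁻¹) of a finite quasi-ordered set, where S is the set of atoms of A and x R y iff x ≤ C y. -/
/-!
A finite Boolean algebra is atomic, so `a ↦ {atoms below a}` is an order isomorphism onto the
powerset of its atoms, hence also an isomorphism of Boolean algebras. Every element is the finite
join of the atoms below it, and atoms are join-prime; so for an operator `C` preserving finite
joins, an atom `x` lies below `C a` iff it lies below `C y` for some atom `y ≤ a`, which says that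
`C` corresponds to `R⁻¹`. Reflexivity and transitivity of `R` come from `a ≤ C a` and
`C (C a) = C a`.
-/

theorem IsAtom.supIrred {α : Type*} [SemilatticeSup α] [OrderBot α] {a : α} (ha : IsAtom a) :
    SupIrred a := by
  refine ⟨fun h => ha.ne_bot h.eq_bot, fun b c hbc => ?_⟩
  rcases ha.le_iff.1 (hbc ▸ le_sup_left : b ≤ a) with rfl | hb
  · exact Or.inr (by simpa using hbc)
  · exact Or.inl hb

theorem IsAtom.le_map_iff_exists_atom {A B F : Type*} [BooleanAlgebra A] [Finite A]
    [DistribLattice B] [OrderBot B] [FunLike F A B] [SupBotHomClass F A B] (g : F) {x : B}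
    (hx : IsAtom x) (a : A) : x ≤ g a ↔ ∃ y, IsAtom y ∧ y ≤ a ∧ x ≤ g y := by
  classical
  have := Fintype.ofFinite A
  have ha : a = {y | IsAtom y ∧ y ≤ a}.toFinset.sup id :=
    BooleanAlgebra.eq_iff_atom_le_iff.2 fun z hz => by
      simp only [hz.supIrred.supPrime.le_finset_sup, Set.mem_toFinset, Set.mem_ofPred_eq, id]
      exact ⟨fun hza => ⟨z, ⟨hz, hza⟩, le_rfl⟩, fun ⟨y, ⟨_, hya⟩, hzy⟩ => hzy.trans hya⟩
  conv_lhs => rw [ha, map_finset_sup]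
  simp [hx.supIrred.supPrime.le_finset_sup, and_assoc]

noncomputable def atomSetOrderIso (A : Type*) [BooleanAlgebra A] [Fintype A] :
    A ≃o Set {x : A // IsAtom x} :=
  letI := Fintype.toCompleteAtomicBooleanAlgebra A
  CompleteAtomicBooleanAlgebra.toSetOfIsAtom

theorem stmt_17 {A : Type*} [BooleanAlgebra A] [Fintype A]
    (C : A → A)
    (hadd : ∀ a b, C (a ⊔ b) = C a ⊔ C b)
    (hbot : C ⊥ = ⊥)
    (hinfl : ∀ a, a ≤ C a)
    (hidem : ∀ a, C (C a) = C a)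
    (R : {x : A // IsAtom x} → {x : A // IsAtom x} → Prop)
    (hR : ∀ x y, R x y ↔ (x : A) ≤ C (y : A))
    (f : A → Set {x : A // IsAtom x})
    (hf : ∀ a, f a = {x : {x : A // IsAtom x} | (x : A) ≤ a}) :
    Reflexive R ∧ Transitive R ∧
    Function.Bijective f ∧
    (∀ a b, f (a ⊓ b) = f a ∩ f b) ∧
    (∀ a b, f (a ⊔ b) = f a ∪ f b) ∧
    (∀ a, f aᶜ = (f a)ᶜ) ∧
    (∀ a, f (C a) = {x | ∃ y ∈ f a, R x y}) := by
  let c : SupBotHom A A := ⟨⟨C, hadd⟩, hbot⟩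
  obtain rfl : f = atomSetOrderIso A := funext hf
  refine ⟨fun x => (hR x x).2 (hinfl x), fun x y z hxy hyz => ?_, (atomSetOrderIso A).bijective,
    map_inf _, map_sup _, map_compl _, fun a => ?_⟩
  · rw [hR] at hxy hyz ⊢
    exact hxy.trans ((OrderHomClass.mono c hyz).trans_eq (hidem z))
  · ext x
    simp only [hf, Set.mem_ofPred_eq, hR, Subtype.exists, exists_prop]
    exact x.2.le_map_iff_exists_atom c a
end
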